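/- Let A be a commutative unital involutive algebra over ℂ (the involution being a conjugate-linear ring involution), let n > 1, and let K_n(A) be the Lie algebra of all skew-adjoint n×n matrices over A. Then every 2-local inner derivation on K_n(A) is an inner derivation, i.e. there exists a single element ā ∈ M_n(A) such that Δ(x) = ā x - x ā for all x ∈ K_n(A). -/

import Mathlib

open Matrix

section Aux

variable {𝒜 : Type*} [CommRing 𝒜] [Algebra ℂ 𝒜] {n : ℕ}

/-- Cancellation of a nonzero complex scalar in a `ℂ`-algebra. -/
lemma aux_cancel (z : ℂ) (hz : z ≠ 0) (a : 𝒜) (h : algebraMap ℂ 𝒜 z * a = 0) : a = 0 := by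
  have h2 : algebraMap ℂ 𝒜 z⁻¹ * (algebraMap ℂ 𝒜 z * a) = 0 := by rw [h, mul_zero]
  rwa [← mul_assoc, ← _root_.map_mul, inv_mul_cancel₀ hz, _root_.map_one, one_mul] at h2

set_option linter.unusedSectionVars false in
lemma aux_trace_mul_single (M : Matrix (Fin n) (Fin n) 𝒜) (i j : Fin n) (a : 𝒜) :
    Matrix.trace (M * Matrix.single i j a) = M j i * a := by
  classical
  simp [Matrix.trace, Matrix.diag, Matrix.mul_apply, Matrix.single, ite_and,
    Finset.sum_ite_eq, Finset.sum_ite_eq']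

set_option linter.unusedSectionVars false in
lemma aux_key (m x y : Matrix (Fin n) (Fin n) 𝒜) :
    Matrix.trace ((m * x - x * m) * y + x * (m * y - y * m)) = 0 := by
  have h1 : (m * x - x * m) * y + x * (m * y - y * m) = m * (x * y) - (x * y) * m := by
    noncomm_ring
  rw [h1, Matrix.trace_sub, Matrix.trace_mul_comm, sub_self]

set_option linter.unusedSectionVars false in
lemma aux_Yskew [StarRing 𝒜] (k l : Fin n) (hkl : k ≠ l) : ∀ i j,
    star ((Matrix.single k l (1 : 𝒜) - Matrix.single l k (1 : 𝒜)) i j)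
      = - (Matrix.single k l (1 : 𝒜) - Matrix.single l k (1 : 𝒜)) j i := by
  intro i j
  simp only [Matrix.sub_apply, Matrix.single, Matrix.of_apply]
  by_cases h1 : k = i ∧ l = j
  · obtain ⟨rfl, rfl⟩ := h1
    simp [hkl, Ne.symm hkl]
  · by_cases h2 : l = i ∧ k = j
    · obtain ⟨rfl, rfl⟩ := h2
      simp [hkl, Ne.symm hkl]
    · have h3 : ¬(k = j ∧ l = i) := fun hc => h2 ⟨hc.2, hc.1⟩
      have h4 : ¬(l = j ∧ k = i) := fun hc => h1 ⟨hc.2, hc.1⟩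
      simp [h1, h2, h3, h4]

set_option linter.unusedSectionVars false in
lemma aux_Zskew [StarRing 𝒜] (u : 𝒜) (hu : star u = -u) (k l : Fin n) (hkl : k ≠ l) : ∀ i j,
    star ((Matrix.single k l u + Matrix.single l k u) i j)
      = - (Matrix.single k l u + Matrix.single l k u) j i := by
  intro i j
  simp only [Matrix.add_apply, Matrix.single, Matrix.of_apply]
  by_cases h1 : k = i ∧ l = j
  · obtain ⟨rfl, rfl⟩ := h1
    simp [hkl, Ne.symm hkl, hu]
  · by_cases h2 : l = i ∧ k = j
    · obtain ⟨rfl, rfl⟩ := h2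
      simp [hkl, Ne.symm hkl, hu]
    · have h3 : ¬(k = j ∧ l = i) := fun hc => h2 ⟨hc.2, hc.1⟩
      have h4 : ¬(l = j ∧ k = i) := fun hc => h1 ⟨hc.2, hc.1⟩
      simp [h1, h2, h3, h4]

set_option linter.unusedSectionVars false in
lemma aux_diagcomm_Y (h : Fin n → 𝒜) (k l : Fin n) (hkl : k ≠ l) :
    Matrix.diagonal h * (Matrix.single k l (1 : 𝒜) - Matrix.single l k (1 : 𝒜))
      - (Matrix.single k l (1 : 𝒜) - Matrix.single l k (1 : 𝒜))
          * Matrix.diagonal h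
    = Matrix.single k l (h k - h l) + Matrix.single l k (h k - h l) := by
  ext p q
  simp only [Matrix.sub_apply, Matrix.add_apply, Matrix.diagonal_mul, Matrix.mul_diagonal,
    Matrix.single, Matrix.of_apply]
  by_cases h1 : k = p ∧ l = q
  · obtain ⟨rfl, rfl⟩ := h1
    simp only [and_self, if_true, Ne.symm hkl, hkl, false_and, and_false, if_false]
    simp [hkl, Ne.symm hkl]
  · by_cases h2 : l = p ∧ k = q
    · obtain ⟨rfl, rfl⟩ := h2
      simp [hkl, Ne.symm hkl]
      ring
    · simp [h1, h2]

set_option linter.unusedSectionVars false in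
lemma aux_diagcomm_Z (h : Fin n → 𝒜) (k l : Fin n) (u : 𝒜) (he : h k = h l) :
    Matrix.diagonal h * (Matrix.single k l u + Matrix.single l k u)
      - (Matrix.single k l u + Matrix.single l k u) * Matrix.diagonal h
    = 0 := by
  ext p q
  simp only [Matrix.sub_apply, Matrix.add_apply, Matrix.diagonal_mul, Matrix.mul_diagonal,
    Matrix.single, Matrix.of_apply, Matrix.zero_apply]
  by_cases h1 : k = p ∧ l = q
  · obtain ⟨rfl, rfl⟩ := h1
    by_cases h2 : l = k ∧ k = l
    · obtain ⟨rfl, -⟩ := h2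
      simp only [and_self, if_true]
      ring
    · simp only [h2, if_false, and_self, if_true]
      rw [he]
      ring
  · by_cases h2 : l = p ∧ k = q
    · obtain ⟨rfl, rfl⟩ := h2
      simp only [h1, if_false, and_self, if_true]
      rw [he]
      ring
    · simp [h1, h2]

lemma aux_two_I_ne : Complex.I + Complex.I ≠ 0 := by
  intro h
  simpa using congrArg Complex.im h

end Aux

/-- **Theorem 3.6 (Ayupov–Arzikulov–Umrzaqov).**
Let `𝒜` be a commutative unital involutive algebra over `ℂ` (the involution being a
conjugate-linear ring involution, i.e. `𝒜` is a commutative `ℂ`-star-algebra),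
let `n > 1`, and let `K_n(𝒜)` be the Lie algebra of skew-adjoint `n × n` matrices over
`𝒜` (those `x` with `star (x i j) = - x j i`).  Every 2-local inner derivation `Δ` on
`K_n(𝒜)` is an inner derivation: there is a single matrix `A ∈ M_n(𝒜)` with
`Δ x = A * x - x * A` for all skew-adjoint `x`. -/
theorem two_local_inner_derivation_on_skew_matrices_over_algebra_is_inner
    {𝒜 : Type*} [CommRing 𝒜] [Algebra ℂ 𝒜] [StarRing 𝒜] [StarModule ℂ 𝒜]
    (n : ℕ) (hn : 1 < n)
    (Δ : Matrix (Fin n) (Fin n) 𝒜 → Matrix (Fin n) (Fin n) 𝒜)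
    (hΔ : ∀ x y : Matrix (Fin n) (Fin n) 𝒜,
        (∀ i j, star (x i j) = - x j i) → (∀ i j, star (y i j) = - y j i) →
        ∃ a : Matrix (Fin n) (Fin n) 𝒜,
          (∀ i j, star (a i j) = - a j i) ∧
          Δ x = a * x - x * a ∧ Δ y = a * y - y * a) :
    ∃ A : Matrix (Fin n) (Fin n) 𝒜,
      ∀ x : Matrix (Fin n) (Fin n) 𝒜, (∀ i j, star (x i j) = - x j i) →
        Δ x = A * x - x * A := by
  classical
  set ι : 𝒜 := algebraMap ℂ 𝒜 Complex.I with hι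
  have hstarι : star ι = -ι := by
    rw [hι, ← algebraMap_star_comm]
    simp
  -- the diagonal test matrix `D`
  set d : Fin n → 𝒜 := fun p => algebraMap ℂ 𝒜 (Complex.I * (p : ℕ)) with hd
  set D : Matrix (Fin n) (Fin n) 𝒜 := Matrix.diagonal d with hD
  have hDskew : ∀ i j, star (D i j) = - D j i := by
    intro i j
    by_cases h : i = j
    · subst h
      simp only [hD, Matrix.diagonal_apply_eq, hd, ← algebraMap_star_comm]
      rw [← map_neg]
      congr 1
      simp [Complex.ext_iff]
    · rw [hD, Matrix.diagonal_apply_ne _ h, Matrix.diagonal_apply_ne _ (Ne.symm h)]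
      simp
  -- the constant test matrix `S`
  set S : Matrix (Fin n) (Fin n) 𝒜 := Matrix.of (fun _ _ => ι) with hS
  have hSskew : ∀ i j, star (S i j) = - S j i := by
    intro i j; simpa [hS] using hstarι
  obtain ⟨c, -, hcD, hcS⟩ := hΔ D S hDskew hSskew
  -- trace identity for the difference `G x = Δ x - [c, x]`
  have traceId : ∀ x y : Matrix (Fin n) (Fin n) 𝒜,
      (∀ i j, star (x i j) = - x j i) → (∀ i j, star (y i j) = - y j i) →
      Matrix.trace ((Δ x - (c * x - x * c)) * y)
        + Matrix.trace (x * (Δ y - (c * y - y * c))) = 0 := by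
    intro x y hx hy
    obtain ⟨a, -, hax, hay⟩ := hΔ x y hx hy
    have ex : Δ x - (c * x - x * c) = (a - c) * x - x * (a - c) := by
      rw [hax]; noncomm_ring
    have ey : Δ y - (c * y - y * c) = (a - c) * y - y * (a - c) := by
      rw [hay]; noncomm_ring
    rw [ex, ey, ← Matrix.trace_add, aux_key]
  -- structure lemma: `Δ x - [c, x]` is a commutator with a diagonal matrix
  have hdiag : ∀ x : Matrix (Fin n) (Fin n) 𝒜, (∀ i j, star (x i j) = - x j i) →
      ∃ h : Fin n → 𝒜, Δ x - (c * x - x * c)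
        = Matrix.diagonal h * x - x * Matrix.diagonal h := by
    intro x hx
    obtain ⟨a, -, hax, haD⟩ := hΔ x D hx hDskew
    have hmD : (a - c) * D - D * (a - c) = 0 := by
      have h1 : (a - c) * D - D * (a - c) = (a * D - D * a) - (c * D - D * c) := by
        noncomm_ring
      rw [h1, ← haD, ← hcD, sub_self]
    have hoff : ∀ p q, p ≠ q → (a - c) p q = 0 := by
      intro p q hpq
      have h0 := congrFun (congrFun hmD p) q
      simp only [hD, Matrix.sub_apply, Matrix.mul_diagonal, Matrix.diagonal_mul,
        Matrix.zero_apply, hd] at h0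
      have h1 : algebraMap ℂ 𝒜 (Complex.I * (q : ℕ) - Complex.I * (p : ℕ))
          * (a p q - c p q) = 0 := by
        rw [_root_.map_sub]
        linear_combination h0
      have hz : (Complex.I * (q : ℕ) - Complex.I * (p : ℕ)) ≠ 0 := by
        intro hz
        apply hpq
        have h2 : ((q : ℕ) : ℂ) = ((p : ℕ) : ℂ) :=
          mul_left_cancel₀ Complex.I_ne_zero (sub_eq_zero.mp hz)
        exact (Fin.val_injective (Nat.cast_injective h2)).symm
      rw [Matrix.sub_apply]
      exact aux_cancel _ hz _ h1
    refine ⟨fun p => (a - c) p p, ?_⟩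
    have hm : a - c = Matrix.diagonal (fun p => (a - c) p p) := by
      ext p q
      by_cases h : p = q
      · subst h; simp
      · rw [Matrix.diagonal_apply_ne _ h, hoff p q h]
    have e1 : Δ x - (c * x - x * c) = (a - c) * x - x * (a - c) := by
      rw [hax]; noncomm_ring
    rw [e1, ← hm]
  refine ⟨c, ?_⟩
  -- entrywise form of a diagonal commutator
  have entry : ∀ (h : Fin n → 𝒜) (x : Matrix (Fin n) (Fin n) 𝒜) (p q : Fin n),
      (Matrix.diagonal h * x - x * Matrix.diagonal h) p q = (h p - h q) * x p q := by
    intro h x p q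
    simp only [Matrix.sub_apply, Matrix.diagonal_mul, Matrix.mul_diagonal]
    ring
  -- Step A : `Δ` agrees with `[c, ·]` on the matrices `Y k l = E_kl - E_lk`
  have stepA : ∀ k l : Fin n, k ≠ l →
      Δ (Matrix.single k l (1 : 𝒜) - Matrix.single l k (1 : 𝒜))
        - (c * (Matrix.single k l (1 : 𝒜) - Matrix.single l k (1 : 𝒜))
          - (Matrix.single k l (1 : 𝒜) - Matrix.single l k (1 : 𝒜)) * c)
        = 0 := by
    intro k l hkl
    set Y : Matrix (Fin n) (Fin n) 𝒜 :=
      Matrix.single k l (1 : 𝒜) - Matrix.single l k (1 : 𝒜) with hY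
    obtain ⟨h, hh⟩ := hdiag Y (aux_Yskew k l hkl)
    have hGY : Δ Y - (c * Y - Y * c)
        = Matrix.single k l (h k - h l) + Matrix.single l k (h k - h l) :=
      hh.trans (aux_diagcomm_Y h k l hkl)
    have hGS : Δ S - (c * S - S * c) = 0 := by rw [hcS]; exact sub_self _
    have htr := traceId Y S (aux_Yskew k l hkl) hSskew
    rw [hGS, Matrix.mul_zero, Matrix.trace_zero, add_zero, hGY, Matrix.add_mul,
      Matrix.trace_add] at htr
    have t1 : Matrix.trace (Matrix.single k l (h k - h l) * S) = (h k - h l) * ι := by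
      rw [Matrix.trace_mul_comm, aux_trace_mul_single]
      simp [hS, mul_comm]
    have t2 : Matrix.trace (Matrix.single l k (h k - h l) * S) = (h k - h l) * ι := by
      rw [Matrix.trace_mul_comm, aux_trace_mul_single]
      simp [hS, mul_comm]
    rw [t1, t2] at htr
    have hlz : algebraMap ℂ 𝒜 (Complex.I + Complex.I) * (h k - h l) = 0 := by
      rw [map_add, ← hι]
      linear_combination htr
    have hl0 : h k - h l = 0 := aux_cancel _ aux_two_I_ne _ hlz
    rw [hGY, hl0, Matrix.single_zero, Matrix.single_zero, add_zero]
  -- Step B : `Δ` agrees with `[c, ·]` on the matrices `Z k l = ι·(E_kl + E_lk)`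
  have stepB : ∀ k l : Fin n, k ≠ l →
      Δ (Matrix.single k l ι + Matrix.single l k ι)
        - (c * (Matrix.single k l ι + Matrix.single l k ι)
          - (Matrix.single k l ι + Matrix.single l k ι) * c)
        = 0 := by
    intro k l hkl
    set Z : Matrix (Fin n) (Fin n) 𝒜 :=
      Matrix.single k l ι + Matrix.single l k ι with hZ
    obtain ⟨h, hh⟩ := hdiag Z (aux_Zskew ι hstarι k l hkl)
    have htr := traceId Z
      (Matrix.single k l (1 : 𝒜) - Matrix.single l k (1 : 𝒜))
      (aux_Zskew ι hstarι k l hkl) (aux_Yskew k l hkl)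
    rw [stepA k l hkl, Matrix.mul_zero, Matrix.trace_zero, add_zero, hh,
      Matrix.mul_sub, Matrix.trace_sub, aux_trace_mul_single, aux_trace_mul_single,
      entry, entry, mul_one, mul_one] at htr
    have hZlk : Z l k = ι := by
      rw [hZ, Matrix.add_apply,
        Matrix.single_apply_of_ne (h := fun hc => hkl hc.1),
        Matrix.single_apply_same, zero_add]
    have hZkl : Z k l = ι := by
      rw [hZ, Matrix.add_apply, Matrix.single_apply_same,
        Matrix.single_apply_of_ne (h := fun hc => hkl hc.2), add_zero]
    rw [hZlk, hZkl] at htr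
    -- htr : (h l - h k) * ι - (h k - h l) * ι = 0
    have hlz : algebraMap ℂ 𝒜 (Complex.I + Complex.I) * (h l - h k) = 0 := by
      rw [map_add, ← hι]
      linear_combination htr
    have hl0 : h l - h k = 0 := aux_cancel _ aux_two_I_ne _ hlz
    have he : h k = h l := (sub_eq_zero.mp hl0).symm
    rw [hh]
    exact aux_diagcomm_Z h k l ι he
  -- Final step
  intro x hx
  obtain ⟨h, hh⟩ := hdiag x hx
  have hzero : Matrix.diagonal h * x - x * Matrix.diagonal h = 0 := by
    ext p q
    rw [entry, Matrix.zero_apply]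
    by_cases hpq : p = q
    · subst hpq; ring
    · have htr1 := traceId x
        (Matrix.single p q (1 : 𝒜) - Matrix.single q p (1 : 𝒜))
        hx (aux_Yskew p q hpq)
      rw [stepA p q hpq, Matrix.mul_zero, Matrix.trace_zero, add_zero, hh,
        Matrix.mul_sub, Matrix.trace_sub, aux_trace_mul_single, aux_trace_mul_single,
        entry, entry, mul_one, mul_one] at htr1
      -- htr1 : (h q - h p) * x q p - (h p - h q) * x p q = 0
      have htr2 := traceId x
        (Matrix.single p q ι + Matrix.single q p ι)
        hx (aux_Zskew ι hstarι p q hpq)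
      rw [stepB p q hpq, Matrix.mul_zero, Matrix.trace_zero, add_zero, hh,
        Matrix.mul_add, Matrix.trace_add, aux_trace_mul_single, aux_trace_mul_single,
        entry, entry] at htr2
      -- htr2 : (h q - h p) * x q p * ι + (h p - h q) * x p q * ι = 0
      have hfin : algebraMap ℂ 𝒜 (Complex.I + Complex.I) * ((h p - h q) * x p q) = 0 := by
        rw [map_add, ← hι]
        linear_combination htr2 - ι * htr1
      exact aux_cancel _ aux_two_I_ne _ hfin
  have hfinal := hh.trans hzero
  exact sub_eq_zero.mp hfinal
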